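/- arXiv:1910.09949 — 7 statements merged into one kernel-verified Lean document; each statement's English description precedes it below -/
import Mathlib

section
/- Let (Ω, 𝔽, P) be a probability space, R > 0, d > 0, t ≥ d, and n̂ = ⌈R(t-d)⌉. Let D : ℕ → Ω → ℝ be a sequence of random variables such that almost surely the map n ↦ D(n)(ω) is nondecreasing. Then P( ∀ n, ¬(D(n) ≤ t ∧ t - n/R ≤ d) ) = P( D(n̂) > t ). In particular, the probability that the age of information at time t exceeds d equals the probability that the tagged packet n̂ has not departed by time t. -/
open MeasureTheory

theorem Monotone.forall_le_imp_lt_iff {α β : Type*} [Preorder α] [Preorder β] {f : α → β}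
    (hf : Monotone f) (a : α) (b : β) : (∀ x, a ≤ x → b < f x) ↔ b < f a :=
  ⟨fun h => h a le_rfl, fun h _ hx => h.trans_le (hf hx)⟩

theorem sub_div_le_iff_mul_sub_le {R d t x : ℝ} (hR : 0 < R) :
    t - x / R ≤ d ↔ R * (t - d) ≤ x := by
  rw [sub_le_comm, le_div_iff₀ hR, mul_comm]

/-- The packets that arrived at or after `t - d` are exactly those with index `≥ ⌈R(t-d)⌉₊`,
so under FCFS none of them has departed by `t` iff the first of them has not. -/
theorem forall_not_departed_iff_tagged_not_departed {R d t : ℝ} (hR : 0 < R) {D : ℕ → ℝ}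
    (hD : Monotone D) :
    (∀ n : ℕ, ¬ (D n ≤ t ∧ t - (n : ℝ) / R ≤ d)) ↔ t < D ⌈R * (t - d)⌉₊ := by
  rw [← hD.forall_le_imp_lt_iff]
  refine forall_congr' fun n => ?_
  rw [Nat.ceil_le, ← sub_div_le_iff_mul_sub_le hR, not_and', not_le]

theorem stmt5_general {Ω : Type*} [MeasurableSpace Ω] (μ : Measure Ω)
    (R d t : ℝ) (hR : 0 < R)
    (D : ℕ → Ω → ℝ)
    (hmono : ∀ᵐ ω ∂μ, Monotone fun n => D n ω) :
    μ {ω | ∀ n : ℕ, ¬ (D n ω ≤ t ∧ t - (n : ℝ) / R ≤ d)} =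
      μ {ω | t < D ⌈R * (t - d)⌉₊ ω} := by
  apply measure_congr
  filter_upwards [hmono] with ω hω
  exact propext (forall_not_departed_iff_tagged_not_departed hR hω)

/-- Under FCFS (almost surely nondecreasing departure times), the probability that no packet
with arrival time in `[t-d, t]` has departed by time `t` (i.e. the AoI at `t` exceeds `d`)
equals the probability that the tagged packet `n̂ = ⌈R(t-d)⌉` has not departed by `t`. -/
theorem stmt5 {Ω : Type*} [MeasurableSpace Ω] (μ : Measure Ω) [IsProbabilityMeasure μ]
    (R d t : ℝ) (hR : 0 < R) (hd : 0 < d) (ht : d ≤ t)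
    (D : ℕ → Ω → ℝ) (hmeas : ∀ n, Measurable (D n))
    (hmono : ∀ᵐ ω ∂μ, Monotone fun n => D n ω) :
    μ {ω | ∀ n : ℕ, ¬ (D n ω ≤ t ∧ t - (n : ℝ) / R ≤ d)} =
      μ {ω | t < D ⌈R * (t - d)⌉₊ ω} :=
  stmt5_general μ R d t hR D hmono
end

section
/- Let (X^i)_{i≥0} be i.i.d. nonnegative real random variables, let R > 0, d > 0 and t ≥ d, set n̂ = ⌈R(t-d)⌉, and define the departure time D(n̂) = max_{0 ≤ v ≤ n̂} ( (n̂ - v)/R + Σ_{i=0}^{v} X^{n̂ - i} ). Then P( D(n̂) > t ) ≤ Σ_{v=0}^{n̂} P( Σ_{i=0}^{v} X^i > d + (v-1)/R ). -/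
open MeasureTheory ProbabilityTheory

/-!
By Reich's equation the tagged packet leaves after `t` only if, for some `v ≤ n̂`, the `v + 1`
service times of packets `n̂ - v, …, n̂` exceed `t - (n̂ - v)/R`; since `n̂ ≤ R(t - d) + 1`, this
threshold is at least `d + (v - 1)/R`. The union bound over `v` then leaves sums of `v + 1`
service times with reversed indices, which for an i.i.d. sequence have the law of
`X⁰ + ⋯ + Xᵛ`.
-/

/-- Reich's (max-plus) equation: departure time of packet `n` from an FCFS queue with
arrival process `A` and service times `X`. -/
noncomputable def depart {Ω : Type*} (A : ℕ → Ω → ℝ) (X : ℕ → Ω → ℝ) (n : ℕ) (ω : Ω) : ℝ :=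
  (Finset.range (n + 1)).sup' ⟨0, Finset.mem_range.mpr (Nat.succ_pos n)⟩
    (fun v => A (n - v) ω + ∑ i ∈ Finset.range (v + 1), X (n - i) ω)

namespace ProbabilityTheory

variable {Ω ι κ β : Type*} {mΩ : MeasurableSpace Ω} {μ : Measure Ω} [MeasurableSpace β]

lemma iIndepFun.identDistrib_comp_injective [Countable κ] {X : ι → Ω → β}
    (hX : iIndepFun X μ) (hident : ∀ i j, IdentDistrib (X i) (X j) μ μ) {f g : κ → ι}
    (hf : f.Injective) (hg : g.Injective) :
    IdentDistrib (fun ω k ↦ X (f k) ω) (fun ω k ↦ X (g k) ω) μ μ :=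
  IdentDistrib.pi (fun k ↦ hident (f k) (g k)) (hX.precomp hf) (hX.precomp hg)

lemma iIndepFun.identDistrib_sum_range_sub [AddCommMonoid β] [MeasurableAdd₂ β]
    {X : ℕ → Ω → β} (hX : iIndepFun X μ) (hident : ∀ i j, IdentDistrib (X i) (X j) μ μ)
    {m n : ℕ} (hmn : m ≤ n + 1) :
    IdentDistrib (fun ω ↦ ∑ i ∈ Finset.range m, X (n - i) ω)
      (fun ω ↦ ∑ i ∈ Finset.range m, X i ω) μ μ := by
  have hrev : (fun k : Fin m ↦ n - k).Injective := fun k l hkl ↦ by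
    have := k.is_lt; have := l.is_lt; ext; simp only at hkl; omega
  have hsum : Measurable fun x : Fin m → β ↦ ∑ k, x k :=
    Finset.measurable_sum _ fun k _ ↦ measurable_pi_apply k
  simpa only [Function.comp_def, Finset.sum_range] using
    (hX.identDistrib_comp_injective hident hrev Fin.val_injective).comp hsum

end ProbabilityTheory

lemma lt_depart_iff {Ω : Type*} {A X : ℕ → Ω → ℝ} {n : ℕ} {ω : Ω} {t : ℝ} :
    t < depart A X n ω ↔
      ∃ v ∈ Finset.range (n + 1), t < A (n - v) ω + ∑ i ∈ Finset.range (v + 1), X (n - i) ω :=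
  Finset.lt_sup'_iff _

lemma setOf_lt_depart {Ω : Type*} (A X : ℕ → Ω → ℝ) (n : ℕ) (t : ℝ) :
    {ω | t < depart A X n ω} =
      ⋃ v ∈ Finset.range (n + 1),
        {ω | t < A (n - v) ω + ∑ i ∈ Finset.range (v + 1), X (n - i) ω} := by
  ext ω
  simp [lt_depart_iff]

lemma add_sub_one_div_le_sub_sub_div {R d t : ℝ} {n v : ℕ} (hR : 0 < R)
    (hn : (n : ℝ) ≤ R * (t - d) + 1) (hv : v ≤ n) :
    d + ((v : ℝ) - 1) / R ≤ t - ((n - v : ℕ) : ℝ) / R := by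
  have : ((n : ℝ) - 1) / R ≤ t - d := by
    rw [div_le_iff₀ hR]; linarith
  rw [Nat.cast_sub hv]
  have : ((v : ℝ) - 1) / R + ((n : ℝ) - v) / R = ((n : ℝ) - 1) / R := by ring
  linarith

theorem stmt6_general {Ω : Type*} [MeasurableSpace Ω] (μ : Measure Ω)
    (X : ℕ → Ω → ℝ) (hmeas : ∀ i, Measurable (X i))
    (hindep : iIndepFun X μ)
    (hident : ∀ i, μ.map (X i) = μ.map (X 0))
    (R d t : ℝ) (hR : 0 < R) (ht : d ≤ t) :
    μ {ω | t < depart (fun n _ => (n : ℝ) / R) X ⌈R * (t - d)⌉₊ ω} ≤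
      ∑ v ∈ Finset.range (⌈R * (t - d)⌉₊ + 1),
        μ {ω | d + ((v : ℝ) - 1) / R < ∑ i ∈ Finset.range (v + 1), X i ω} := by
  set n := ⌈R * (t - d)⌉₊
  have hn : (n : ℝ) ≤ R * (t - d) + 1 :=
    (Nat.ceil_lt_add_one (mul_nonneg hR.le (sub_nonneg.2 ht))).le
  have hiid : ∀ i j, IdentDistrib (X i) (X j) μ μ := fun i j ↦
    ⟨(hmeas i).aemeasurable, (hmeas j).aemeasurable, (hident i).trans (hident j).symm⟩
  rw [setOf_lt_depart]
  refine (measure_biUnion_finset_le _ _).trans (Finset.sum_le_sum fun v hv ↦ ?_)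
  have hvn : v ≤ n := Nat.lt_succ_iff.1 (Finset.mem_range.1 hv)
  calc μ {ω | t < ((n - v : ℕ) : ℝ) / R + ∑ i ∈ Finset.range (v + 1), X (n - i) ω}
      ≤ μ {ω | d + ((v : ℝ) - 1) / R < ∑ i ∈ Finset.range (v + 1), X (n - i) ω} :=
        measure_mono fun ω hω ↦ by
          have := add_sub_one_div_le_sub_sub_div hR hn hvn
          simp only [Set.mem_ofPred_eq] at hω ⊢
          linarith
    _ = μ {ω | d + ((v : ℝ) - 1) / R < ∑ i ∈ Finset.range (v + 1), X i ω} :=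
        (hindep.identDistrib_sum_range_sub hiid (by omega)).measure_mem_eq
          (measurableSet_lt measurable_const measurable_id)

/-- Union-bound upper bound on the violation probability of the departure instant of the tagged
packet `n̂ = ⌈R(t-d)⌉` for a D/G/1 FCFS queue with i.i.d. nonnegative service times. -/
theorem stmt6 {Ω : Type*} [MeasurableSpace Ω] (μ : Measure Ω) [IsProbabilityMeasure μ]
    (X : ℕ → Ω → ℝ) (hmeas : ∀ i, Measurable (X i)) (hnn : ∀ i ω, 0 ≤ X i ω)
    (hindep : iIndepFun X μ)
    (hident : ∀ i, μ.map (X i) = μ.map (X 0))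
    (R d t : ℝ) (hR : 0 < R) (hd : 0 < d) (ht : d ≤ t) :
    μ {ω | t < depart (fun n _ => (n : ℝ) / R) X ⌈R * (t - d)⌉₊ ω} ≤
      ∑ v ∈ Finset.range (⌈R * (t - d)⌉₊ + 1),
        μ {ω | d + ((v : ℝ) - 1) / R < ∑ i ∈ Finset.range (v + 1), X i ω} :=
  stmt6_general μ X hmeas hindep hident R d t hR ht
end

section
/- Let s > 0, m > 0 and d ∈ ℝ. The function T ↦ e^{-s d} · m · e^{2 s T} / (e^{s T} - m), defined on the open interval ( (ln m)/s, ∞ ) (where e^{s T} > m), is strictly convex. -/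
/-!
Since `e^{2sT} / (e^{sT} - m) = e^{sT} + m / (1 - m e^{-sT})`, the function is a positive multiple
of `e^{sT}`, which is strictly convex, plus a nonnegative multiple of the reciprocal of the
positive concave function `1 - m e^{-sT}`, which is convex.
-/

open Real Set

theorem ConcaveOn.convexOn_inv {E : Type*} [AddCommGroup E] [Module ℝ E] {S : Set E}
    {f : E → ℝ} (hf : ConcaveOn ℝ S f) (hpos : ∀ x ∈ S, 0 < f x) :
    ConvexOn ℝ S fun x => (f x)⁻¹ := by
  have hinv : ConvexOn ℝ (Ioi 0) fun u : ℝ => u⁻¹ := by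
    simpa using convexOn_zpow (𝕜 := ℝ) (-1)
  refine ⟨hf.1, fun x hx y hy a b ha hb hab => ?_⟩
  have hmid : a • f x + b • f y ≤ f (a • x + b • y) := hf.2 hx hy ha hb hab
  have hmid_pos : 0 < a • f x + b • f y := hinv.1 (hpos x hx) (hpos y hy) ha hb hab
  calc (f (a • x + b • y))⁻¹ ≤ (a • f x + b • f y)⁻¹ := inv_anti₀ hmid_pos hmid
    _ ≤ a • (f x)⁻¹ + b • (f y)⁻¹ := hinv.2 (hpos x hx) (hpos y hy) ha hb hab

theorem strictConvexOn_const_mul_exp_mul {c s : ℝ} (hc : 0 < c) (hs : s ≠ 0) :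
    StrictConvexOn ℝ univ fun T => c * exp (s * T) := by
  refine ⟨convex_univ, fun x _ y _ hxy a b ha hb hab => ?_⟩
  have hsxy : s * x ≠ s * y := by simpa [hs] using hxy
  have hexp := strictConvexOn_exp.2 (mem_univ _) (mem_univ _) hsxy ha hb hab
  simp only [smul_eq_mul] at hexp ⊢
  calc c * exp (s * (a * x + b * y)) = c * exp (a * (s * x) + b * (s * y)) := by ring_nf
    _ < c * (a * exp (s * x) + b * exp (s * y)) := mul_lt_mul_of_pos_left hexp hc
    _ = a * (c * exp (s * x)) + b * (c * exp (s * y)) := by ring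

theorem concaveOn_one_sub_mul_exp_mul {m : ℝ} (hm : 0 ≤ m) (s : ℝ) :
    ConcaveOn ℝ univ fun T => 1 - m * exp (s * T) := by
  have hexp : ConvexOn ℝ univ fun T => exp (s * T) := by
    simpa [Function.comp_def] using convexOn_exp.comp_linearMap (LinearMap.mul ℝ ℝ s)
  exact ((hexp.smul hm).neg.add_const 1).congr fun T _ => by simp [sub_eq_neg_add]

theorem exp_two_mul_div_exp_sub_eq {s m T : ℝ} (h : exp (s * T) ≠ m) :
    exp (2 * s * T) / (exp (s * T) - m) = exp (s * T) + m * (1 - m * exp (-s * T))⁻¹ := by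
  have hsub : exp (s * T) - m ≠ 0 := sub_ne_zero.2 h
  have hexp : exp (s * T) ≠ 0 := (exp_pos _).ne'
  rw [show 2 * s * T = s * T + s * T by ring, exp_add, neg_mul, exp_neg]
  field_simp
  ring

theorem log_div_lt_iff_lt_exp_mul {s m T : ℝ} (hs : 0 < s) (hm : 0 < m) :
    log m / s < T ↔ m < exp (s * T) := by
  rw [div_lt_iff₀ hs, ← log_lt_iff_lt_exp hm, mul_comm]

/-- The single-hop Chernoff upper bound, written in the inter-arrival time `T = 1/R` as
`Ψ₁(s,d,T) = e^{-sd} · m · e^{2sT} / (e^{sT} - m)` with `m = M(s)`, is strictly convex in `T`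
on the region `e^{sT} > m`. -/
theorem stmt8 (s m d : ℝ) (hs : 0 < s) (hm : 0 < m) :
    StrictConvexOn ℝ (Set.Ioi (Real.log m / s))
      (fun T => Real.exp (-s * d) * m * Real.exp (2 * s * T) / (Real.exp (s * T) - m)) := by
  have hC : 0 < exp (-s * d) * m := by positivity
  have hD : Convex ℝ (Ioi (log m / s)) := convex_Ioi _
  have hlt : ∀ T ∈ Ioi (log m / s), m < exp (s * T) := fun T hT =>
    (log_div_lt_iff_lt_exp_mul hs hm).1 hT
  have hpos : ∀ T ∈ Ioi (log m / s), 0 < 1 - m * exp (-s * T) := fun T hT => by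
    rw [sub_pos, neg_mul, exp_neg, ← div_eq_mul_inv, div_lt_one (exp_pos _)]
    exact hlt T hT
  have hexp := (strictConvexOn_const_mul_exp_mul hC hs.ne').subset (subset_univ _) hD
  have hinv :=
    ((concaveOn_one_sub_mul_exp_mul hm.le (-s)).subset (subset_univ _) hD).convexOn_inv hpos
  refine (hexp.add_convexOn (hinv.smul (mul_nonneg hC.le hm.le))).congr fun T hT => ?_
  simp only [Pi.add_apply, smul_eq_mul, mul_div_assoc, exp_two_mul_div_exp_sub_eq (hlt T hT).ne']
  ring
end

section
/- Let X be a nonnegative real random variable, R > 0 and d > 0, and let S′ ⊆ (0, ∞) be a convex set such that for every s ∈ S′ the moment generating function M(s) = E[e^{s X}] is finite and satisfies M(s) < e^{s/R}. Then the function s ↦ e^{-s(d - 1/R)} M(s) / (1 - M(s) e^{-s/R}) is convex on S′. -/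
/-! Hölder's inequality makes the moment generating function `M` log-convex. Expanding the
bound as the geometric series `∑ᵥ e^{-s(d + (v-1)/R)} M(s)^{v+1}`, every term is then the
exponential of a convex function of `s`, hence convex, and a pointwise convergent series of
convex functions is convex. -/

open MeasureTheory ProbabilityTheory Real

theorem ConvexOn.exp {E : Type*} [AddCommMonoid E] [Module ℝ E] {s : Set E} {f : E → ℝ}
    (hf : ConvexOn ℝ s f) : ConvexOn ℝ s (fun x => exp (f x)) :=
  ⟨hf.1, fun _ hx _ hy _ _ ha hb hab =>
    (exp_le_exp.2 (hf.2 hx hy ha hb hab)).trans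
      (convexOn_exp.2 (Set.mem_univ _) (Set.mem_univ _) ha hb hab)⟩

theorem ConvexOn.of_hasSum {ι E : Type*} [AddCommMonoid E] [Module ℝ E] {s : Set E}
    {f : ι → E → ℝ} {g : E → ℝ} (hs : Convex ℝ s) (hf : ∀ i, ConvexOn ℝ s (f i))
    (hg : ∀ x ∈ s, HasSum (fun i => f i x) (g x)) : ConvexOn ℝ s g :=
  ⟨hs, fun x hx y hy a b ha hb hab =>
    hasSum_le (fun i => (hf i).2 hx hy ha hb hab) (hg _ (hs hx hy ha hb hab))
      (((hg x hx).const_smul a).add ((hg y hy).const_smul b))⟩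

theorem hasSum_exp_mul_pow_succ {M s d R : ℝ} (hM : 0 ≤ M) (hlt : M < exp (s / R)) :
    HasSum (fun v : ℕ => exp (-(d + (v - 1) / R) * s) * M ^ (v + 1))
      (exp (-s * (d - 1 / R)) * M / (1 - M * exp (-(s / R)))) := by
  have hr : M * exp (-(s / R)) < 1 := by
    rwa [exp_neg, ← div_eq_mul_inv, div_lt_one (exp_pos _)]
  rw [div_eq_mul_inv]
  refine ((hasSum_geometric_of_lt_one (by positivity) hr).mul_left
    (exp (-s * (d - 1 / R)) * M)).congr_fun fun v => ?_
  have hexp : -(d + (v - 1) / R) * s = -s * (d - 1 / R) + v * -(s / R) := by ring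
  rw [mul_pow, ← exp_nat_mul, hexp, exp_add, pow_succ]
  ring

namespace ProbabilityTheory

variable {Ω : Type*} [MeasurableSpace Ω] {X : Ω → ℝ} {μ : Measure Ω}

theorem mgf_mul_add_mul_le {x y a b : ℝ} (hx : Integrable (fun ω => exp (x * X ω)) μ)
    (hy : Integrable (fun ω => exp (y * X ω)) μ) (ha : 0 ≤ a) (hb : 0 ≤ b) (hab : a + b = 1) :
    mgf X μ (a * x + b * y) ≤ mgf X μ x ^ a * mgf X μ y ^ b := by
  have hz : Integrable (fun ω => exp ((a * x + b * y) * X ω)) μ :=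
    convex_integrableExpSet hx hy ha hb hab
  have hsplit : ∀ ω, ENNReal.ofReal (exp ((a * x + b * y) * X ω)) =
      ENNReal.ofReal (exp (x * X ω)) ^ a * ENNReal.ofReal (exp (y * X ω)) ^ b := by
    intro ω
    rw [ENNReal.ofReal_rpow_of_nonneg (exp_pos _).le ha,
      ENNReal.ofReal_rpow_of_nonneg (exp_pos _).le hb, ← ENNReal.ofReal_mul (by positivity),
      ← exp_mul, ← exp_mul, ← exp_add]
    ring_nf
  have hofReal : ∀ t, Integrable (fun ω => exp (t * X ω)) μ →
      ENNReal.ofReal (mgf X μ t) = ∫⁻ ω, ENNReal.ofReal (exp (t * X ω)) ∂μ := fun t ht =>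
    ofReal_integral_eq_lintegral_ofReal ht (Filter.Eventually.of_forall fun _ => (exp_pos _).le)
  -- Pass to `ℝ≥0∞`, where the weighted Hölder inequality `∫⁻ f^a g^b ≤ (∫⁻ f)^a (∫⁻ g)^b` lives.
  rw [← ENNReal.ofReal_le_ofReal_iff
      (mul_nonneg (rpow_nonneg mgf_nonneg _) (rpow_nonneg mgf_nonneg _)),
    ENNReal.ofReal_mul (rpow_nonneg mgf_nonneg _),
    ← ENNReal.ofReal_rpow_of_nonneg mgf_nonneg ha, ← ENNReal.ofReal_rpow_of_nonneg mgf_nonneg hb,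
    hofReal _ hz, hofReal _ hx, hofReal _ hy]
  simp_rw [hsplit]
  exact ENNReal.lintegral_mul_norm_pow_le hx.aemeasurable.ennreal_ofReal
    hy.aemeasurable.ennreal_ofReal ha hb hab

variable (X μ) [NeZero μ]

theorem convexOn_log_mgf : ConvexOn ℝ (integrableExpSet X μ) (fun t => log (mgf X μ t)) := by
  refine ⟨convex_integrableExpSet, fun x hx y hy a b ha hb hab => ?_⟩
  have hz : a • x + b • y ∈ integrableExpSet X μ := convex_integrableExpSet hx hy ha hb hab
  have hpos : ∀ t ∈ integrableExpSet X μ, 0 < mgf X μ t := fun t ht => mgf_pos' (NeZero.ne μ) ht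
  calc log (mgf X μ (a • x + b • y))
      ≤ log (mgf X μ x ^ a * mgf X μ y ^ b) :=
        log_le_log (hpos _ hz) (mgf_mul_add_mul_le hx hy ha hb hab)
    _ = a • log (mgf X μ x) + b • log (mgf X μ y) := by
        rw [log_mul (rpow_pos_of_pos (hpos x hx) a).ne' (rpow_pos_of_pos (hpos y hy) b).ne',
          log_rpow (hpos x hx), log_rpow (hpos y hy), smul_eq_mul, smul_eq_mul]

theorem convexOn_exp_mul_mul_mgf_pow (c : ℝ) (n : ℕ) :
    ConvexOn ℝ (integrableExpSet X μ) (fun t => exp (c * t) * mgf X μ t ^ n) := by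
  have hlog : ConvexOn ℝ (integrableExpSet X μ) (fun t => c * t + n * log (mgf X μ t)) :=
    ((LinearMap.mul ℝ ℝ c).convexOn convex_integrableExpSet).add
      ((convexOn_log_mgf X μ).smul n.cast_nonneg)
  refine hlog.exp.congr fun t ht => ?_
  dsimp only
  rw [exp_add, ← log_pow, exp_log (pow_pos (mgf_pos' (NeZero.ne μ) ht) n)]

end ProbabilityTheory

theorem stmt9_general {Ω : Type*} [MeasurableSpace Ω] (μ : Measure Ω) [IsProbabilityMeasure μ]
    (X : Ω → ℝ) (R d : ℝ) (S' : Set ℝ) (hS'conv : Convex ℝ S')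
    (hint : ∀ s ∈ S', Integrable (fun ω => Real.exp (s * X ω)) μ)
    (hlt : ∀ s ∈ S', (∫ ω, Real.exp (s * X ω) ∂μ) < Real.exp (s / R)) :
    ConvexOn ℝ S' (fun s => Real.exp (-s * (d - 1 / R)) * (∫ ω, Real.exp (s * X ω) ∂μ) /
      (1 - (∫ ω, Real.exp (s * X ω) ∂μ) * Real.exp (-(s / R)))) :=
  ConvexOn.of_hasSum hS'conv
    (fun v => (convexOn_exp_mul_mul_mgf_pow X μ _ (v + 1)).subset hint hS'conv)
    (fun s hs => hasSum_exp_mul_pow_succ mgf_nonneg (hlt s hs))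

/-- The single-hop Chernoff upper bound `Ψ₁(s,d,R) = e^{-s(d-1/R)} M(s)/(1 - M(s)e^{-s/R})`
is convex in `s` on any convex set `S' ⊆ (0,∞)` on which the MGF `M(s) = E[e^{sX}]` is finite
and satisfies `M(s) < e^{s/R}`. -/
theorem stmt9 {Ω : Type*} [MeasurableSpace Ω] (μ : Measure Ω) [IsProbabilityMeasure μ]
    (X : Ω → ℝ) (hmeas : Measurable X) (hnn : ∀ ω, 0 ≤ X ω)
    (R d : ℝ) (hR : 0 < R) (hd : 0 < d)
    (S' : Set ℝ) (hS'conv : Convex ℝ S') (hS'pos : S' ⊆ Set.Ioi 0)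
    (hint : ∀ s ∈ S', Integrable (fun ω => Real.exp (s * X ω)) μ)
    (hlt : ∀ s ∈ S', (∫ ω, Real.exp (s * X ω) ∂μ) < Real.exp (s / R)) :
    ConvexOn ℝ S' (fun s => Real.exp (-s * (d - 1 / R)) * (∫ ω, Real.exp (s * X ω) ∂μ) /
      (1 - (∫ ω, Real.exp (s * X ω) ∂μ) * Real.exp (-(s / R)))) :=
  stmt9_general μ X R d S' hS'conv hint hlt
end

section
/- Let (X^i)_{i≥0} be i.i.d. nonnegative real random variables, R > 0, d > 0, and let s > 0 satisfy M(s) = E[e^{s X^0}] < ∞ and M(s) < e^{s/R}; set β(s) = M(s) e^{-s/R} and Ψ1(s,d,R) = e^{-s(d - 1/R)} M(s)/(1 - β(s)). Then for every K ∈ ℕ, Σ_{v=K}^{∞} P( Σ_{i=0}^{v} X^i > d + (v-1)/R ) ≤ Ψ1(s,d,R) · β(s)^K. -/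
open MeasureTheory ProbabilityTheory Real Finset

/-! Chernoff's bound turns the `v`-th term into `e^{-s(d - 1/R)} M(s) β(s)^v`: the moment
generating function of a sum of `v + 1` i.i.d. copies is `M(s)^{v+1}`, and the threshold grows by
`1/R` per term. Since `β(s) < 1`, the tail from `v = K` is a convergent geometric series. -/

theorem measure_sum_range_gt_le_exp_mul_mgf_pow {Ω : Type*} [MeasurableSpace Ω] {μ : Measure Ω}
    {X : ℕ → Ω → ℝ} (hmeas : ∀ i, Measurable (X i)) (hindep : iIndepFun X μ)
    (hident : ∀ i, IdentDistrib (X i) (X 0) μ μ) {t : ℝ} (ht : 0 ≤ t)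
    (hint : Integrable (fun ω => exp (t * X 0 ω)) μ) (n : ℕ) (a : ℝ) :
    μ {ω | a < ∑ i ∈ range n, X i ω} ≤
      ENNReal.ofReal (exp (-t * a) * mgf (X 0) μ t ^ n) := by
  have := hindep.isProbabilityMeasure
  have hint_i : ∀ i, Integrable (fun ω => exp (t * X i ω)) μ := fun i =>
    ((hident i).comp (measurable_const_mul t).exp).integrable_iff.mpr hint
  have hmgf : mgf (∑ i ∈ range n, X i) μ t = mgf (X 0) μ t ^ n := by
    rw [hindep.mgf_sum hmeas, prod_congr rfl fun i _ => mgf_congr_of_identDistrib _ _ (hident i) t,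
      prod_const, card_range]
  calc μ {ω | a < ∑ i ∈ range n, X i ω}
      ≤ μ {ω | a ≤ (∑ i ∈ range n, X i) ω} :=
        measure_mono fun ω (hω : a < _) => by
          simpa only [Set.mem_ofPred_eq, Finset.sum_apply] using hω.le
    _ = ENNReal.ofReal (μ.real {ω | a ≤ (∑ i ∈ range n, X i) ω}) := (ofReal_measureReal).symm
    _ ≤ ENNReal.ofReal (exp (-t * a) * mgf (X 0) μ t ^ n) := by
        rw [← hmgf]
        exact ENNReal.ofReal_le_ofReal
          (measure_ge_le_exp_mul_mgf a ht (hindep.integrable_exp_mul_sum hmeas fun i _ => hint_i i))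

theorem exp_neg_mul_mul_pow_succ (s d R M : ℝ) (m : ℕ) :
    exp (-s * (d + ((m : ℝ) - 1) / R)) * M ^ (m + 1) =
      exp (-s * (d - 1 / R)) * M * (M * exp (-(s / R))) ^ m := by
  have hexp : -s * (d + ((m : ℝ) - 1) / R) = -s * (d - 1 / R) + m * (-(s / R)) := by ring
  rw [hexp, exp_add, mul_pow, exp_nat_mul]
  ring

theorem tsum_ofReal_mul_pow_add {c r : ℝ} (hc : 0 ≤ c) (hr₀ : 0 ≤ r) (hr₁ : r < 1)
    (K : ℕ) :
    ∑' v : ℕ, ENNReal.ofReal (c * r ^ (K + v)) = ENNReal.ofReal (c / (1 - r) * r ^ K) := by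
  have hsum : Summable fun v : ℕ => c * r ^ K * r ^ v :=
    (summable_geometric_of_lt_one hr₀ hr₁).mul_left _
  simp only [pow_add, ← mul_assoc]
  rw [← ENNReal.ofReal_tsum_of_nonneg (fun v => by positivity) hsum, tsum_mul_left,
    tsum_geometric_of_lt_one hr₀ hr₁]
  congr 1
  field_simp

theorem stmt10_general {Ω : Type*} [MeasurableSpace Ω] (μ : Measure Ω)
    (X : ℕ → Ω → ℝ) (hmeas : ∀ i, Measurable (X i))
    (hindep : iIndepFun X μ)
    (hident : ∀ i, μ.map (X i) = μ.map (X 0))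
    (R d s : ℝ) (hs : 0 < s)
    (hint : Integrable (fun ω => Real.exp (s * X 0 ω)) μ)
    (hlt : (∫ ω, Real.exp (s * X 0 ω) ∂μ) < Real.exp (s / R)) (K : ℕ) :
    (∑' v : ℕ, μ {ω | d + (((K + v : ℕ) : ℝ) - 1) / R <
        ∑ i ∈ Finset.range (K + v + 1), X i ω}) ≤
      ENNReal.ofReal ((Real.exp (-s * (d - 1 / R)) * (∫ ω, Real.exp (s * X 0 ω) ∂μ) /
        (1 - (∫ ω, Real.exp (s * X 0 ω) ∂μ) * Real.exp (-(s / R)))) *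
        ((∫ ω, Real.exp (s * X 0 ω) ∂μ) * Real.exp (-(s / R))) ^ K) := by
  set M := ∫ ω, exp (s * X 0 ω) ∂μ
  have hM : mgf (X 0) μ s = M := rfl
  have hM₀ : 0 ≤ M := hM ▸ mgf_nonneg
  have hβ₁ : M * exp (-(s / R)) < 1 := by
    calc M * exp (-(s / R)) < exp (s / R) * exp (-(s / R)) := by gcongr
      _ = 1 := by rw [← exp_add, add_neg_cancel, exp_zero]
  have hX : ∀ i, IdentDistrib (X i) (X 0) μ μ := fun i =>
    ⟨(hmeas i).aemeasurable, (hmeas 0).aemeasurable, hident i⟩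
  calc _ ≤ ∑' v : ℕ,
          ENNReal.ofReal (exp (-s * (d - 1 / R)) * M * (M * exp (-(s / R))) ^ (K + v)) :=
        ENNReal.tsum_le_tsum fun v =>
          (measure_sum_range_gt_le_exp_mul_mgf_pow hmeas hindep hX hs.le hint _ _).trans_eq
            (by rw [hM, exp_neg_mul_mul_pow_succ])
    _ = _ := tsum_ofReal_mul_pow_add (by positivity) (by positivity) hβ₁ K

/-- Geometric tail bound: for i.i.d. nonnegative service times with MGF `M(s) < e^{s/R}`,
the tail `Σ_{v ≥ K} Φ(v,R)` of the union-bound series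
`Φ(v,R) = P(Σ_{i=0}^{v} Xⁱ > d + (v-1)/R)` is at most `Ψ₁(s,d,R) β(s)^K`, where
`β(s) = M(s) e^{-s/R}` and `Ψ₁(s,d,R) = e^{-s(d-1/R)} M(s)/(1-β(s))`. -/
theorem stmt10 {Ω : Type*} [MeasurableSpace Ω] (μ : Measure Ω) [IsProbabilityMeasure μ]
    (X : ℕ → Ω → ℝ) (hmeas : ∀ i, Measurable (X i)) (hnn : ∀ i ω, 0 ≤ X i ω)
    (hindep : iIndepFun X μ)
    (hident : ∀ i, μ.map (X i) = μ.map (X 0))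
    (R d s : ℝ) (hR : 0 < R) (hd : 0 < d) (hs : 0 < s)
    (hint : Integrable (fun ω => Real.exp (s * X 0 ω)) μ)
    (hlt : (∫ ω, Real.exp (s * X 0 ω) ∂μ) < Real.exp (s / R)) (K : ℕ) :
    (∑' v : ℕ, μ {ω | d + (((K + v : ℕ) : ℝ) - 1) / R <
        ∑ i ∈ Finset.range (K + v + 1), X i ω}) ≤
      ENNReal.ofReal ((Real.exp (-s * (d - 1 / R)) * (∫ ω, Real.exp (s * X 0 ω) ∂μ) /
        (1 - (∫ ω, Real.exp (s * X 0 ω) ∂μ) * Real.exp (-(s / R)))) *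
        ((∫ ω, Real.exp (s * X 0 ω) ∂μ) * Real.exp (-(s / R))) ^ K) :=
  stmt10_general μ X hmeas hindep hident R d s hs hint hlt K
end

section
/- Let (X^i)_{i≥0} be i.i.d. nonnegative real random variables, R > 0, d > 0, t ≥ d, n̂ = ⌈R(t-d)⌉, and D(n̂) = max_{0 ≤ v ≤ n̂} ( (n̂ - v)/R + Σ_{i=0}^{v} X^{n̂ - i} ). Let s > 0 satisfy M(s) = E[e^{s X^0}] < ∞ and M(s) < e^{s/R}, and set β(s) = M(s)e^{-s/R} and Ψ1(s,d,R) = e^{-s(d-1/R)} M(s)/(1-β(s)). Then for every K ∈ ℕ, P( D(n̂) > t ) ≤ Σ_{v=0}^{K-1} P( Σ_{i=0}^{v} X^i > d + (v-1)/R ) + Ψ1(s,d,R) · β(s)^K. -/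
open MeasureTheory ProbabilityTheory

open Finset Real

lemma exists_lt_sum_of_lt_depart {Ω : Type*} {X : ℕ → Ω → ℝ} {R d t : ℝ} {N : ℕ} {ω : Ω}
    (hR : 0 < R) (hN : (N : ℝ) - 1 ≤ R * (t - d))
    (h : t < depart (fun n _ => (n : ℝ) / R) X N ω) :
    ∃ v ∈ range (N + 1), d + ((v : ℝ) - 1) / R < ∑ i ∈ range (v + 1), X (N - i) ω := by
  obtain ⟨v, hv, hlt⟩ := (lt_sup'_iff _).mp h
  refine ⟨v, hv, ?_⟩
  dsimp only at hlt
  rw [Nat.cast_sub (Nat.lt_succ_iff.mp (mem_range.mp hv))] at hlt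
  have hNR : ((N : ℝ) - 1) / R ≤ t - d := (div_le_iff₀ hR).mpr (by linarith)
  have hsplit : ((N : ℝ) - v) / R + ((v : ℝ) - 1) / R = ((N : ℝ) - 1) / R := by
    rw [← add_div]; ring_nf
  linarith

section IID

variable {Ω : Type*} [MeasurableSpace Ω] {μ : Measure Ω} [IsFiniteMeasure μ]
  {X : ℕ → Ω → ℝ}

lemma map_sum_eq_map_sum_range (hmeas : ∀ i, Measurable (X i)) (hindep : iIndepFun X μ)
    (hident : ∀ i, μ.map (X i) = μ.map (X 0)) (s : Finset ℕ) :
    μ.map (∑ i ∈ s, X i) = μ.map (∑ i ∈ range #s, X i) := by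
  classical
  induction s using Finset.induction_on with
  | empty => simp
  | insert j s hj ih =>
    rw [sum_insert hj, card_insert_of_notMem hj, sum_range_succ, add_comm (X j),
      (hindep.indepFun_finsetSum_of_notMem hmeas hj).map_add_eq_map_conv_map
        (by fun_prop) (hmeas j),
      (hindep.indepFun_finsetSum_of_notMem hmeas notMem_range_self).map_add_eq_map_conv_map
        (by fun_prop) (hmeas _),
      ih, hident j, hident #s]

lemma measure_lt_sum_comp_eq (hmeas : ∀ i, Measurable (X i)) (hindep : iIndepFun X μ)
    (hident : ∀ i, μ.map (X i) = μ.map (X 0)) {s : Finset ℕ} {g : ℕ → ℕ}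
    (hg : Set.InjOn g s) (c : ℝ) :
    μ {ω | c < ∑ i ∈ s, X (g i) ω} = μ {ω | c < ∑ i ∈ range #s, X i ω} := by
  classical
  have hlaw : μ.map (∑ i ∈ s, X (g i)) = μ.map (∑ i ∈ range #s, X i) := by
    rw [← sum_image hg, map_sum_eq_map_sum_range hmeas hindep hident, card_image_of_injOn hg]
  have hpre := congrArg (fun ν : Measure ℝ => ν (Set.Ioi c)) hlaw
  rw [Measure.map_apply (by fun_prop) measurableSet_Ioi,
    Measure.map_apply (by fun_prop) measurableSet_Ioi] at hpre
  simpa only [Set.preimage, Set.mem_Ioi, Finset.sum_apply] using hpre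

lemma measure_lt_depart_le_sum (hmeas : ∀ i, Measurable (X i)) (hindep : iIndepFun X μ)
    (hident : ∀ i, μ.map (X i) = μ.map (X 0)) {R d t : ℝ} {N : ℕ} (hR : 0 < R)
    (hN : (N : ℝ) - 1 ≤ R * (t - d)) :
    μ {ω | t < depart (fun n _ => (n : ℝ) / R) X N ω} ≤
      ∑ v ∈ range (N + 1), μ {ω | d + ((v : ℝ) - 1) / R < ∑ i ∈ range (v + 1), X i ω} := by
  calc μ {ω | t < depart (fun n _ => (n : ℝ) / R) X N ω}
      ≤ μ (⋃ v ∈ range (N + 1),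
          {ω | d + ((v : ℝ) - 1) / R < ∑ i ∈ range (v + 1), X (N - i) ω}) := by
        refine measure_mono fun ω hω => ?_
        simpa only [Set.mem_iUnion, Set.mem_ofPred_eq, exists_prop] using
          exists_lt_sum_of_lt_depart hR hN hω
    _ ≤ ∑ v ∈ range (N + 1),
          μ {ω | d + ((v : ℝ) - 1) / R < ∑ i ∈ range (v + 1), X (N - i) ω} :=
        measure_biUnion_finset_le _ _
    _ = _ := by
        refine sum_congr rfl fun v hv => ?_
        have hinj : Set.InjOn (N - ·) (range (v + 1) : Set ℕ) := fun a ha b hb hab => by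
          simp only [coe_range, Set.mem_Iio] at ha hb hab
          have := mem_range.mp hv
          omega
        rw [measure_lt_sum_comp_eq hmeas hindep hident hinj, card_range]

lemma measure_lt_sum_range_le (hmeas : ∀ i, Measurable (X i)) (hindep : iIndepFun X μ)
    (hident : ∀ i, μ.map (X i) = μ.map (X 0)) {s : ℝ} (hs : 0 ≤ s)
    (hint : Integrable (fun ω => exp (s * X 0 ω)) μ) (c : ℝ) (n : ℕ) :
    μ {ω | c < ∑ i ∈ range n, X i ω} ≤ ENNReal.ofReal (exp (-s * c) * mgf (X 0) μ s ^ n) := by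
  have hid : ∀ i, IdentDistrib (X i) (X 0) μ μ :=
    fun i => ⟨(hmeas i).aemeasurable, (hmeas 0).aemeasurable, hident i⟩
  have hmgf : mgf (∑ i ∈ range n, X i) μ s = mgf (X 0) μ s ^ n := by
    rw [hindep.mgf_sum hmeas, prod_congr rfl fun i _ => mgf_congr_of_identDistrib _ _ (hid i) s,
      prod_const, card_range]
  have hintS : Integrable (fun ω => exp (s * (∑ i ∈ range n, X i) ω)) μ :=
    hindep.integrable_exp_mul_sum hmeas fun i _ =>
      ((hid i).comp (measurable_const_mul s).exp).integrable_iff.mpr hint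
  calc μ {ω | c < ∑ i ∈ range n, X i ω}
      ≤ μ {ω | c ≤ (∑ i ∈ range n, X i) ω} :=
        measure_mono fun ω (hω : c < _) => by
          rw [Set.mem_ofPred_eq, Finset.sum_apply]; exact hω.le
    _ = ENNReal.ofReal (μ.real {ω | c ≤ (∑ i ∈ range n, X i) ω}) :=
        (ofReal_measureReal (measure_ne_top μ _)).symm
    _ ≤ _ := by
        rw [← hmgf]
        exact ENNReal.ofReal_le_ofReal (measure_ge_le_exp_mul_mgf c hs hintS)

end IID

lemma sum_range_le_sum_range_add_geom_tail {f : ℕ → ENNReal} {C β : ℝ} (hC : 0 ≤ C)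
    (hβ₀ : 0 ≤ β) (hβ₁ : β < 1) {K : ℕ} (hf : ∀ v, K ≤ v → f v ≤ ENNReal.ofReal (C * β ^ v))
    (n : ℕ) :
    ∑ v ∈ range n, f v ≤ ∑ v ∈ range K, f v + ENNReal.ofReal (C / (1 - β) * β ^ K) := by
  have htail : ∀ m, ∑ v ∈ Ico K m, f v ≤ ENNReal.ofReal (C / (1 - β) * β ^ K) := by
    intro m
    calc ∑ v ∈ Ico K m, f v
        ≤ ∑ v ∈ Ico K m, ENNReal.ofReal (C * β ^ v) :=
          sum_le_sum fun v hv => hf v (mem_Ico.mp hv).1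
      _ = ENNReal.ofReal (C * ∑ v ∈ Ico K m, β ^ v) := by
          rw [mul_sum, ENNReal.ofReal_sum_of_nonneg fun v _ => by positivity]
      _ ≤ ENNReal.ofReal (C * (β ^ K / (1 - β))) := by
          gcongr
          exact geom_sum_Ico_le_of_lt_one hβ₀ hβ₁
      _ = ENNReal.ofReal (C / (1 - β) * β ^ K) := by ring_nf
  calc ∑ v ∈ range n, f v ≤ ∑ v ∈ range (max n K), f v :=
        sum_le_sum_of_subset (range_subset_range.mpr (le_max_left n K))
    _ = ∑ v ∈ range K, f v + ∑ v ∈ Ico K (max n K), f v :=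
        (sum_range_add_sum_Ico f (le_max_right n K)).symm
    _ ≤ _ := by gcongr; exact htail _

theorem stmt11_general {Ω : Type*} [MeasurableSpace Ω] (μ : Measure Ω) [IsProbabilityMeasure μ]
    (X : ℕ → Ω → ℝ) (hmeas : ∀ i, Measurable (X i))
    (hindep : iIndepFun X μ)
    (hident : ∀ i, μ.map (X i) = μ.map (X 0))
    (R d t s : ℝ) (hR : 0 < R) (ht : d ≤ t) (hs : 0 < s)
    (hint : Integrable (fun ω => Real.exp (s * X 0 ω)) μ)
    (hlt : (∫ ω, Real.exp (s * X 0 ω) ∂μ) < Real.exp (s / R)) (K : ℕ) :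
    μ {ω | t < depart (fun n _ => (n : ℝ) / R) X ⌈R * (t - d)⌉₊ ω} ≤
      (∑ v ∈ Finset.range K,
        μ {ω | d + ((v : ℝ) - 1) / R < ∑ i ∈ Finset.range (v + 1), X i ω}) +
      ENNReal.ofReal ((Real.exp (-s * (d - 1 / R)) * (∫ ω, Real.exp (s * X 0 ω) ∂μ) /
        (1 - (∫ ω, Real.exp (s * X 0 ω) ∂μ) * Real.exp (-(s / R)))) *
        ((∫ ω, Real.exp (s * X 0 ω) ∂μ) * Real.exp (-(s / R))) ^ K) := by
  set M := ∫ ω, exp (s * X 0 ω) ∂μ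
  have hM : 0 ≤ M := integral_nonneg fun _ => (exp_pos _).le
  have hβ : M * exp (-(s / R)) < 1 := by
    rwa [exp_neg, ← div_eq_mul_inv, div_lt_one (exp_pos _)]
  have hceil : (⌈R * (t - d)⌉₊ : ℝ) - 1 ≤ R * (t - d) := by
    linarith [Nat.ceil_lt_add_one (mul_nonneg hR.le (sub_nonneg.mpr ht))]
  refine (measure_lt_depart_le_sum hmeas hindep hident hR hceil).trans
    (sum_range_le_sum_range_add_geom_tail (by positivity) (by positivity) hβ (fun v _ => ?_) _)
  have hexp : exp (-s * (d + ((v : ℝ) - 1) / R)) =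
      exp (-s * (d - 1 / R)) * exp (-(s / R)) ^ v := by
    rw [← exp_nat_mul, ← exp_add]
    congr 1
    field_simp
    ring
  calc _ ≤ ENNReal.ofReal (exp (-s * (d + ((v : ℝ) - 1) / R)) * M ^ (v + 1)) :=
        measure_lt_sum_range_le hmeas hindep hident hs.le hint _ _
    _ = _ := by rw [hexp, pow_succ, mul_pow]; congr 1; ring

/-- The α-relaxed upper bound for the single-hop AoI violation probability: the first `K`
union-bound terms `Φ(v,R) = P(Σ_{i=0}^{v} Xⁱ > d + (v-1)/R)` are kept exactly and the tail is
bounded by `Ψ₁(s,d,R) β(s)^K`. -/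
theorem stmt11 {Ω : Type*} [MeasurableSpace Ω] (μ : Measure Ω) [IsProbabilityMeasure μ]
    (X : ℕ → Ω → ℝ) (hmeas : ∀ i, Measurable (X i)) (hnn : ∀ i ω, 0 ≤ X i ω)
    (hindep : iIndepFun X μ)
    (hident : ∀ i, μ.map (X i) = μ.map (X 0))
    (R d t s : ℝ) (hR : 0 < R) (hd : 0 < d) (ht : d ≤ t) (hs : 0 < s)
    (hint : Integrable (fun ω => Real.exp (s * X 0 ω)) μ)
    (hlt : (∫ ω, Real.exp (s * X 0 ω) ∂μ) < Real.exp (s / R)) (K : ℕ) :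
    μ {ω | t < depart (fun n _ => (n : ℝ) / R) X ⌈R * (t - d)⌉₊ ω} ≤
      (∑ v ∈ Finset.range K,
        μ {ω | d + ((v : ℝ) - 1) / R < ∑ i ∈ Finset.range (v + 1), X i ω}) +
      ENNReal.ofReal ((Real.exp (-s * (d - 1 / R)) * (∫ ω, Real.exp (s * X 0 ω) ∂μ) /
        (1 - (∫ ω, Real.exp (s * X 0 ω) ∂μ) * Real.exp (-(s / R)))) *
        ((∫ ω, Real.exp (s * X 0 ω) ∂μ) * Real.exp (-(s / R))) ^ K) :=
  stmt11_general μ X hmeas hindep hident R d t s hR ht hs hint hlt K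
end

section
/- Fix N ≥ 1 and let (X_k^i) for k ∈ {1, …, N}, i ≥ 0 be nonnegative real random variables that are mutually independent and all identically distributed with common MGF M(s) = E[e^{s X_1^0}]. Let R > 0, d > 0, t ≥ d, n̂ = ⌈R(t-d)⌉, and define recursively D_1(n) = max_{0 ≤ v ≤ n} ( (n-v)/R + Σ_{i=0}^{v} X_1^{n-i} ) and, for 2 ≤ k ≤ N, D_k(n) = max_{0 ≤ v ≤ n} ( D_{k-1}(n-v) + Σ_{i=0}^{v} X_k^{n-i} ). Suppose s > 0 satisfies M(s) < ∞ and M(s) < e^{s/R}. Then P( D_N(n̂) > t ) ≤ e^{-s(d - 1/R)} · M(s)^N / ( 1 - M(s) e^{-s/R} )^N. -/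
/-!
Chernoff's bound reduces the claim to `E e^{s D_N(n̂)} ≤ e^{s n̂/R} (M / (1 - q))^N` with
`M = E e^{sX}` and `q = M e^{-s/R} < 1`, since `n̂/R ≤ t - d + 1/R`. This follows by induction on
the hop `k`: bounding the maximum in Reich's equation by the sum over `v` gives
`E e^{s D_{k+1}(n)} ≤ ∑_v E e^{s D_k(n-v)} · M^{v+1}`, because `D_k(n-v)` is a function of the
service times at nodes `1, …, k` alone and hence independent of the service times at node `k+1`;
the resulting sum over `v` is geometric with ratio `q`.
-/

open MeasureTheory ProbabilityTheory

/-- Departure times of an `N`-hop tandem of FCFS queues fed by a periodic source of rate `R`: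
`departN R X 0 n ω = n/R` (the arrival process) and node `k+1` serves the departures of node
`k` with service times `X (k+1)`. -/
noncomputable def departN {Ω : Type*} (R : ℝ) (X : ℕ → ℕ → Ω → ℝ) : ℕ → ℕ → Ω → ℝ
  | 0 => fun n _ => (n : ℝ) / R
  | k + 1 => depart (departN R X k) (X (k + 1))

open Finset Real

section Queue

variable {Ω : Type*} {A : ℕ → Ω → ℝ} {X : ℕ → Ω → ℝ}

lemma measurable_depart [MeasurableSpace Ω] (hA : ∀ m, Measurable (A m))
    (hX : ∀ i, Measurable (X i)) (n : ℕ) : Measurable (depart A X n) :=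
  Finset.measurable_range_sup'' fun _ _ =>
    (hA _).add (Finset.measurable_sum _ fun _ _ => hX _)

lemma exp_mul_depart_le_sum (s : ℝ) (n : ℕ) (ω : Ω) :
    exp (s * depart A X n ω) ≤
      ∑ v ∈ range (n + 1), exp (s * (A (n - v) ω + ∑ i ∈ range (v + 1), X (n - i) ω)) := by
  obtain ⟨v, hv, hmax⟩ := Finset.exists_mem_eq_sup' nonempty_range_add_one
    fun v => A (n - v) ω + ∑ i ∈ range (v + 1), X (n - i) ω
  rw [depart, hmax]
  exact single_le_sum (f := fun v => exp (s * (A (n - v) ω + ∑ i ∈ range (v + 1), X (n - i) ω)))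
    (fun _ _ => (exp_pos _).le) hv

variable [MeasurableSpace Ω] {μ : Measure Ω} {s : ℝ} {n : ℕ}

lemma integrable_exp_mul_depart (hA : ∀ m, Measurable (A m)) (hX : ∀ i, Measurable (X i))
    (hint : ∀ v ∈ range (n + 1),
      Integrable (fun ω => exp (s * (A (n - v) ω + ∑ i ∈ range (v + 1), X (n - i) ω))) μ) :
    Integrable (fun ω => exp (s * depart A X n ω)) μ :=
  (integrable_finsetSum _ hint).mono'
    ((measurable_depart hA hX n).const_mul s).exp.aestronglyMeasurable
    (.of_forall fun ω => by
      rw [norm_of_nonneg (exp_pos _).le]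
      exact exp_mul_depart_le_sum s n ω)

lemma mgf_depart_le_sum (hA : ∀ m, Measurable (A m)) (hX : ∀ i, Measurable (X i))
    (hint : ∀ v ∈ range (n + 1),
      Integrable (fun ω => exp (s * (A (n - v) ω + ∑ i ∈ range (v + 1), X (n - i) ω))) μ) :
    mgf (depart A X n) μ s ≤
      ∑ v ∈ range (n + 1), mgf (fun ω => A (n - v) ω + ∑ i ∈ range (v + 1), X (n - i) ω) μ s :=
  (integral_mono (integrable_exp_mul_depart hA hX hint) (integrable_finsetSum _ hint)
    (exp_mul_depart_le_sum s n)).trans_eq (integral_finsetSum _ hint)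

end Queue

lemma measurable_departN {Ω : Type*} {m : MeasurableSpace Ω} (R : ℝ) {X : ℕ → ℕ → Ω → ℝ}
    {k : ℕ} (hX : ∀ j, 1 ≤ j → j ≤ k → ∀ i, Measurable (X j i)) (n : ℕ) :
    Measurable (departN R X k n) := by
  induction k generalizing n with
  | zero => exact measurable_const
  | succ k ih =>
    exact measurable_depart (ih fun j hj hjk => hX j hj (hjk.trans k.le_succ))
      (hX (k + 1) k.succ_pos le_rfl) n

lemma measurable_biSup_comap {Ω ι β : Type*} [mβ : MeasurableSpace β] (f : ι → Ω → β)
    {S : Set ι} {i : ι} (hi : i ∈ S) : Measurable[⨆ j ∈ S, mβ.comap (f j)] (f i) :=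
  (comap_measurable _).mono (le_biSup (fun j => mβ.comap (f j)) hi) le_rfl

namespace ProbabilityTheory

lemma iIndepFun.indepFun_of_measurable_iSup {Ω ι β γ δ : Type*} {mΩ : MeasurableSpace Ω}
    {μ : Measure Ω} [mβ : MeasurableSpace β] [MeasurableSpace γ] [MeasurableSpace δ]
    {f : ι → Ω → β} (hf : ∀ i, Measurable (f i)) (h : iIndepFun f μ) {S T : Set ι}
    (hST : Disjoint S T) {F : Ω → γ} {G : Ω → δ}
    (hF : Measurable[(⨆ i ∈ S, mβ.comap (f i))] F) (hG : Measurable[(⨆ i ∈ T, mβ.comap (f i))] G) :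
    IndepFun F G μ := by
  rw [IndepFun_iff_Indep]
  exact indep_of_indep_of_le_right
    (indep_of_indep_of_le_left
      (indep_iSup_of_disjoint (fun i => (hf i).comap_le) h.iIndep hST) hF.comap_le)
    hG.comap_le

lemma IdentDistrib.of_map_eq {α β : Type*} [MeasurableSpace α] [MeasurableSpace β]
    {μ : Measure α} [NeZero μ] {f g : α → β} (hf : AEMeasurable f μ)
    (h : μ.map f = μ.map g) : IdentDistrib f g μ μ where
  aemeasurable_fst := hf
  aemeasurable_snd := .of_map_ne_zero (h ▸ (Measure.map_ne_zero_iff hf).mpr (NeZero.ne μ))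
  map_eq := h

end ProbabilityTheory

lemma injOn_serviceIndex {N k : ℕ} (hk : k < N) {v n : ℕ} (hvn : v ≤ n) :
    Set.InjOn (fun i => ((⟨k, hk⟩ : Fin N), n - i)) (range (v + 1)) := by
  intro i hi j hj hij
  simp only [coe_range, Set.mem_Iio, Prod.mk.injEq, true_and] at hi hj hij
  omega

lemma serviceSum_eq_sum_image {Ω : Type*} {N : ℕ} {X : ℕ → ℕ → Ω → ℝ} {k : ℕ} (hk : k < N)
    {v n : ℕ} (hvn : v ≤ n) :
    (fun ω => ∑ i ∈ range (v + 1), X (k + 1) (n - i) ω) =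
      ∑ p ∈ (range (v + 1)).image (fun i => ((⟨k, hk⟩ : Fin N), n - i)),
        X ((p.1 : ℕ) + 1) p.2 := by
  ext ω
  rw [Finset.sum_apply, sum_image (injOn_serviceIndex hk hvn)]

lemma sum_exp_mul_pow_le {s R M C : ℝ} (hR : R ≠ 0) (hM : 0 ≤ M) (hC : 0 ≤ C)
    (hq : M * exp (-(s / R)) < 1) (n : ℕ) :
    ∑ v ∈ range (n + 1), exp (s * (((n - v : ℕ) : ℝ) / R)) * C * M ^ (v + 1) ≤
      exp (s * (n / R)) * C * (M / (1 - M * exp (-(s / R)))) := by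
  have hshift {v : ℕ} (hv : v ∈ range (n + 1)) :
      exp (s * (((n - v : ℕ) : ℝ) / R)) = exp (s * (n / R)) * exp (-(s / R)) ^ v := by
    rw [Nat.cast_sub (mem_range_succ_iff.mp hv), ← exp_nat_mul, ← exp_add]
    congr 1
    field_simp
    ring
  calc ∑ v ∈ range (n + 1), exp (s * (((n - v : ℕ) : ℝ) / R)) * C * M ^ (v + 1)
      = exp (s * (n / R)) * C * M * ∑ v ∈ range (n + 1), (M * exp (-(s / R))) ^ v := by
        rw [mul_sum]
        refine sum_congr rfl fun v hv => ?_
        rw [hshift hv]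
        ring
    _ ≤ exp (s * (n / R)) * C * M * (1 - M * exp (-(s / R)))⁻¹ := by
        gcongr
        simpa using geom_sum_Ico_le_of_lt_one (m := 0) (n := n + 1) (by positivity) hq
    _ = exp (s * (n / R)) * C * (M / (1 - M * exp (-(s / R)))) := by ring

section Tandem

variable {Ω : Type*} [MeasurableSpace Ω] {μ : Measure Ω} {N : ℕ} {X : ℕ → ℕ → Ω → ℝ}

lemma mgf_serviceSum (hmeas : ∀ k, 1 ≤ k → k ≤ N → ∀ i, Measurable (X k i))
    (hindep : iIndepFun (fun p : Fin N × ℕ => X ((p.1 : ℕ) + 1) p.2) μ)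
    (hident : ∀ p : Fin N × ℕ, IdentDistrib (X ((p.1 : ℕ) + 1) p.2) (X 1 0) μ μ)
    {k : ℕ} (hk : k < N) {v n : ℕ} (hvn : v ≤ n) (s : ℝ) :
    mgf (fun ω => ∑ i ∈ range (v + 1), X (k + 1) (n - i) ω) μ s = mgf (X 1 0) μ s ^ (v + 1) := by
  rw [serviceSum_eq_sum_image hk hvn,
    mgf_sum_of_identDistrib (X := fun p : Fin N × ℕ => X ((p.1 : ℕ) + 1) p.2)
      (fun p => hmeas _ (Nat.le_add_left _ _) p.1.2 _) hindep
      (fun p _ q _ => (hident p).trans (hident q).symm)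
      (mem_image_of_mem _ (mem_range.mpr v.succ_pos)) s,
    card_image_of_injOn (injOn_serviceIndex hk hvn), card_range,
    mgf_congr_identDistrib (hident _)]

lemma integrable_exp_mul_serviceSum (hmeas : ∀ k, 1 ≤ k → k ≤ N → ∀ i, Measurable (X k i))
    (hindep : iIndepFun (fun p : Fin N × ℕ => X ((p.1 : ℕ) + 1) p.2) μ)
    (hident : ∀ p : Fin N × ℕ, IdentDistrib (X ((p.1 : ℕ) + 1) p.2) (X 1 0) μ μ)
    [IsFiniteMeasure μ] {s : ℝ} (hint : Integrable (fun ω => exp (s * X 1 0 ω)) μ)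
    {k : ℕ} (hk : k < N) {v n : ℕ} (hvn : v ≤ n) :
    Integrable (fun ω => exp (s * ∑ i ∈ range (v + 1), X (k + 1) (n - i) ω)) μ := by
  have h := hindep.integrable_exp_mul_sum (t := s)
    (fun p => hmeas _ (Nat.le_add_left _ _) p.1.2 _)
    (s := (range (v + 1)).image (fun i => ((⟨k, hk⟩ : Fin N), n - i)))
    fun p _ => ((hident p).comp (measurable_const_mul s).exp).integrable_iff.mpr hint
  rwa [← serviceSum_eq_sum_image hk hvn] at h

lemma indepFun_departN_serviceSum (hmeas : ∀ k, 1 ≤ k → k ≤ N → ∀ i, Measurable (X k i))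
    (hindep : iIndepFun (fun p : Fin N × ℕ => X ((p.1 : ℕ) + 1) p.2) μ) (R : ℝ)
    {k : ℕ} (hk : k < N) (m n v : ℕ) :
    IndepFun (departN R X k m) (fun ω => ∑ i ∈ range (v + 1), X (k + 1) (n - i) ω) μ := by
  refine hindep.indepFun_of_measurable_iSup (fun p => hmeas _ (Nat.le_add_left _ _) p.1.2 _)
    (S := {p | (p.1 : ℕ) < k}) (T := {p | (p.1 : ℕ) = k})
    (Set.disjoint_left.mpr fun p hS hT => hS.ne hT) ?_ ?_
  · refine measurable_departN R (fun j hj hjk i => ?_) m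
    obtain ⟨j, rfl⟩ := Nat.exists_eq_add_of_le' hj
    exact measurable_biSup_comap (fun p : Fin N × ℕ => X ((p.1 : ℕ) + 1) p.2)
      (i := (⟨j, by omega⟩, i)) (show j < k by omega)
  · exact Finset.measurable_sum _ fun i _ =>
      measurable_biSup_comap (fun p : Fin N × ℕ => X ((p.1 : ℕ) + 1) p.2)
        (i := (⟨k, hk⟩, n - i)) rfl

lemma integrable_exp_mul_departN (hmeas : ∀ k, 1 ≤ k → k ≤ N → ∀ i, Measurable (X k i))
    (hindep : iIndepFun (fun p : Fin N × ℕ => X ((p.1 : ℕ) + 1) p.2) μ)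
    (hident : ∀ p : Fin N × ℕ, IdentDistrib (X ((p.1 : ℕ) + 1) p.2) (X 1 0) μ μ)
    [IsFiniteMeasure μ] {s : ℝ} (hint : Integrable (fun ω => exp (s * X 1 0 ω)) μ) (R : ℝ)
    {k : ℕ} (hk : k ≤ N) (n : ℕ) :
    Integrable (fun ω => exp (s * departN R X k n ω)) μ := by
  induction k generalizing n with
  | zero => exact integrable_const (μ := μ) (exp (s * (n / R)))
  | succ k ih =>
    exact integrable_exp_mul_depart
      (measurable_departN R fun j hj hjk => hmeas j hj (hjk.trans (k.le_succ.trans hk)))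
      (hmeas _ k.succ_pos hk) fun v hv =>
        (indepFun_departN_serviceSum hmeas hindep R hk _ n v).integrable_exp_mul_add
          (ih (k.le_succ.trans hk) _)
          (integrable_exp_mul_serviceSum hmeas hindep hident hint hk (mem_range_succ_iff.mp hv))

lemma mgf_departN_le (hmeas : ∀ k, 1 ≤ k → k ≤ N → ∀ i, Measurable (X k i))
    (hindep : iIndepFun (fun p : Fin N × ℕ => X ((p.1 : ℕ) + 1) p.2) μ)
    (hident : ∀ p : Fin N × ℕ, IdentDistrib (X ((p.1 : ℕ) + 1) p.2) (X 1 0) μ μ)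
    [IsProbabilityMeasure μ] {s : ℝ} (hint : Integrable (fun ω => exp (s * X 1 0 ω)) μ)
    {R : ℝ} (hR : R ≠ 0) (hq : mgf (X 1 0) μ s * exp (-(s / R)) < 1)
    {k : ℕ} (hk : k ≤ N) (n : ℕ) :
    mgf (departN R X k n) μ s ≤
      exp (s * (n / R)) * (mgf (X 1 0) μ s / (1 - mgf (X 1 0) μ s * exp (-(s / R)))) ^ k := by
  set M := mgf (X 1 0) μ s
  set q := M * exp (-(s / R))
  have hM : 0 ≤ M := mgf_nonneg
  induction k generalizing n with
  | zero => simp [departN]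
  | succ k ih =>
    have hkN : k ≤ N := k.le_succ.trans hk
    have hmeasD : ∀ m, Measurable (departN R X k m) :=
      measurable_departN R fun j hj hjk => hmeas j hj (hjk.trans hkN)
    have hindepD (v : ℕ) := indepFun_departN_serviceSum hmeas hindep R hk (n - v) n v
    have hintD (v : ℕ) := integrable_exp_mul_departN hmeas hindep hident hint R hkN (n - v)
    have hintS {v : ℕ} (hv : v ∈ range (n + 1)) :=
      integrable_exp_mul_serviceSum hmeas hindep hident hint hk (mem_range_succ_iff.mp hv)
    calc mgf (departN R X (k + 1) n) μ s
        ≤ ∑ v ∈ range (n + 1), mgf (fun ω => departN R X k (n - v) ω +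
            ∑ i ∈ range (v + 1), X (k + 1) (n - i) ω) μ s :=
          mgf_depart_le_sum hmeasD (hmeas _ k.succ_pos hk) fun v hv =>
            (hindepD v).integrable_exp_mul_add (hintD v) (hintS hv)
      _ = ∑ v ∈ range (n + 1), mgf (departN R X k (n - v)) μ s * M ^ (v + 1) :=
          sum_congr rfl fun v hv => by
            rw [← mgf_serviceSum hmeas hindep hident hk (mem_range_succ_iff.mp hv) s]
            exact (hindepD v).mgf_add (hintD v).aestronglyMeasurable (hintS hv).aestronglyMeasurable
      _ ≤ ∑ v ∈ range (n + 1),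
            exp (s * (((n - v : ℕ) : ℝ) / R)) * (M / (1 - q)) ^ k * M ^ (v + 1) :=
          sum_le_sum fun v _ => by gcongr; exact ih hkN _
      _ ≤ exp (s * (n / R)) * (M / (1 - q)) ^ k * (M / (1 - q)) :=
          sum_exp_mul_pow_le hR hM (by positivity) hq n
      _ = exp (s * (n / R)) * (M / (1 - q)) ^ (k + 1) := by ring

end Tandem

lemma natCeil_mul_sub_div_le {R d t : ℝ} (hR : 0 < R) (ht : d ≤ t) :
    (⌈R * (t - d)⌉₊ : ℝ) / R ≤ t - d + 1 / R := by
  rw [div_le_iff₀ hR, add_mul, one_div_mul_cancel hR.ne', mul_comm (t - d)]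
  exact (Nat.ceil_lt_add_one (mul_nonneg hR.le (sub_nonneg.mpr ht))).le

theorem stmt18_general {Ω : Type*} [MeasurableSpace Ω] (μ : Measure Ω) [IsProbabilityMeasure μ]
    (N : ℕ) (X : ℕ → ℕ → Ω → ℝ)
    (hmeas : ∀ k, 1 ≤ k → k ≤ N → ∀ i, Measurable (X k i))
    (hindep : iIndepFun
      (fun p : Fin N × ℕ => X ((p.1 : ℕ) + 1) p.2) μ)
    (hident : ∀ k, 1 ≤ k → k ≤ N → ∀ i, μ.map (X k i) = μ.map (X 1 0))
    (R d t s : ℝ) (hR : 0 < R) (ht : d ≤ t) (hs : 0 < s)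
    (hint : Integrable (fun ω => Real.exp (s * X 1 0 ω)) μ)
    (hlt : (∫ ω, Real.exp (s * X 1 0 ω) ∂μ) < Real.exp (s / R)) :
    μ {ω | t < departN R X N ⌈R * (t - d)⌉₊ ω} ≤
      ENNReal.ofReal (Real.exp (-s * (d - 1 / R)) *
        (∫ ω, Real.exp (s * X 1 0 ω) ∂μ) ^ N /
        (1 - (∫ ω, Real.exp (s * X 1 0 ω) ∂μ) * Real.exp (-(s / R))) ^ N) := by
  set n := ⌈R * (t - d)⌉₊
  set M := mgf (X 1 0) μ s
  have hident' (p : Fin N × ℕ) : IdentDistrib (X ((p.1 : ℕ) + 1) p.2) (X 1 0) μ μ :=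
    .of_map_eq (hmeas _ (Nat.le_add_left _ _) p.1.2 _).aemeasurable
      (hident _ (Nat.le_add_left _ _) p.1.2 _)
  have hq : M * exp (-(s / R)) < 1 :=
    calc M * exp (-(s / R)) < exp (s / R) * exp (-(s / R)) :=
          mul_lt_mul_of_pos_right hlt (exp_pos _)
      _ = 1 := by rw [← exp_add, add_neg_cancel, exp_zero]
  have hc : 0 ≤ M / (1 - M * exp (-(s / R))) := div_nonneg mgf_nonneg (sub_pos.mpr hq).le
  have hexp : exp (-s * t) * exp (s * (n / R)) ≤ exp (-s * (d - 1 / R)) := by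
    rw [← exp_add, exp_le_exp]
    nlinarith [natCeil_mul_sub_div_le hR ht]
  have hchernoff := measure_ge_le_exp_mul_mgf t hs.le
    (integrable_exp_mul_departN hmeas hindep hident' hint R le_rfl n)
  have hmgf := mgf_departN_le hmeas hindep hident' hint hR.ne' hq le_rfl n
  calc μ {ω | t < departN R X N n ω}
      ≤ μ {ω | t ≤ departN R X N n ω} :=
        measure_mono (Set.ofPred_subset_ofPred.mpr fun _ => le_of_lt)
    _ = ENNReal.ofReal (μ.real {ω | t ≤ departN R X N n ω}) := (ofReal_measureReal).symm
    _ ≤ _ := ENNReal.ofReal_le_ofReal <| by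
      calc μ.real {ω | t ≤ departN R X N n ω}
          ≤ exp (-s * t) * (exp (s * (n / R)) * (M / (1 - M * exp (-(s / R)))) ^ N) :=
            hchernoff.trans (mul_le_mul_of_nonneg_left hmgf (exp_pos _).le)
        _ ≤ exp (-s * (d - 1 / R)) * (M / (1 - M * exp (-(s / R)))) ^ N := by
            rw [← mul_assoc]
            exact mul_le_mul_of_nonneg_right hexp (pow_nonneg hc N)
        _ = _ := by rw [div_pow, mul_div_assoc]; rfl

/-- N-hop Chernoff upper bound: for an `N`-hop FCFS tandem with periodic arrivals of rate `R`
and i.i.d. service times with common MGF `M(s) < e^{s/R}`, the violation probability of the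
system departure instant of the tagged packet `n̂ = ⌈R(t-d)⌉` is at most
`Ψ_N(s,d,R) = e^{-s(d-1/R)} M(s)^N / (1 - M(s)e^{-s/R})^N`. -/
theorem stmt18 {Ω : Type*} [MeasurableSpace Ω] (μ : Measure Ω) [IsProbabilityMeasure μ]
    (N : ℕ) (hN : 1 ≤ N) (X : ℕ → ℕ → Ω → ℝ)
    (hmeas : ∀ k, 1 ≤ k → k ≤ N → ∀ i, Measurable (X k i))
    (hnn : ∀ k, 1 ≤ k → k ≤ N → ∀ i ω, 0 ≤ X k i ω)
    (hindep : iIndepFun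
      (fun p : Fin N × ℕ => X ((p.1 : ℕ) + 1) p.2) μ)
    (hident : ∀ k, 1 ≤ k → k ≤ N → ∀ i, μ.map (X k i) = μ.map (X 1 0))
    (R d t s : ℝ) (hR : 0 < R) (hd : 0 < d) (ht : d ≤ t) (hs : 0 < s)
    (hint : Integrable (fun ω => Real.exp (s * X 1 0 ω)) μ)
    (hlt : (∫ ω, Real.exp (s * X 1 0 ω) ∂μ) < Real.exp (s / R)) :
    μ {ω | t < departN R X N ⌈R * (t - d)⌉₊ ω} ≤
      ENNReal.ofReal (Real.exp (-s * (d - 1 / R)) *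
        (∫ ω, Real.exp (s * X 1 0 ω) ∂μ) ^ N /
        (1 - (∫ ω, Real.exp (s * X 1 0 ω) ∂μ) * Real.exp (-(s / R))) ^ N) :=
  stmt18_general μ N X hmeas hindep hident R d t s hR ht hs hint hlt
end
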